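/- Let S be a finitely generated, cancellative, reduced commutative monoid minimally generated by A. An element a ∈ S has a unique presentation (its indispensable pair appears in every minimal presentation) if and only if a is a Betti element and #φ_A^{-1}(a) = 2, if and only if a is a Betti-minimal element and #φ_A^{-1}(a) = 2. -/

import Mathlib

/-!
Unique presentation means the fiber of `a` is a pair `{u, v}` with disjoint supports; such a pair
is never linked by `R`, and conversely a fiber of size two that is not a single `R`-class must be a
disjoint pair. For minimality, if `a = b + c` with `b` Betti and `c = φ(w)`, two distinct
factorizations `u', v'` of `b` give distinct factorizations `u' + w`, `v' + w` of `a`, which must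
be `u` and `v`; disjointness of their supports forces `w = 0`, hence `b = a`.
-/

open Finset

variable {M : Type*} [AddCommMonoid M] {r : ℕ}

/-- The factorization homomorphism associated to the generating tuple `A`. -/
def phi (A : Fin r → M) (u : Fin r → ℕ) : M := ∑ i, u i • A i

/-- One step of the relation `R`: two factorizations of `a` with nonzero dot product. -/
def step (A : Fin r → M) (a : M) (u v : Fin r → ℕ) : Prop :=
  phi A u = a ∧ phi A v = a ∧ (∑ i, u i * v i) ≠ 0

/-- The relation `R` on the fiber of `a`: connected by a chain of factorizations with
consecutive nonzero dot products. -/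
def Rrel (A : Fin r → M) (a : M) : (Fin r → ℕ) → (Fin r → ℕ) → Prop :=
  Relation.ReflTransGen (step A a)

/-- `a` is a Betti element: its fiber has more than one `R`-class. -/
def IsBetti (A : Fin r → M) (a : M) : Prop :=
  ∃ u v : Fin r → ℕ, phi A u = a ∧ phi A v = a ∧ ¬ Rrel A a u v

/-- `a` is Betti-minimal: a Betti element minimal with respect to `b ≺ a ↔ a - b ∈ S`. -/
def BettiMinimal (A : Fin r → M) (a : M) : Prop :=
  IsBetti A a ∧ ∀ b : M, IsBetti A b → (∃ c : M, a = b + c) → b = a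

/-- `a` has a unique presentation: exactly two factorizations, with disjoint support. -/
def HasUniquePres (A : Fin r → M) (a : M) : Prop :=
  ∃ u v : Fin r → ℕ, u ≠ v ∧ {w : Fin r → ℕ | phi A w = a} = {u, v} ∧
    (∑ i, u i * v i) = 0

/-- The monoid generated by `A` is uniquely presented: every Betti element has exactly two
factorizations, with disjoint support. -/
def UniquelyPresented (A : Fin r → M) : Prop :=
  ∀ a : M, IsBetti A a → HasUniquePres A a

lemma phi_add (A : Fin r → M) (u v : Fin r → ℕ) :
    phi A (u + v) = phi A u + phi A v := by
  simp [phi, add_smul, Finset.sum_add_distrib]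

lemma phi_zero (A : Fin r → M) : phi A (0 : Fin r → ℕ) = 0 := by
  simp [phi]

lemma sum_add_mul_add_ne_zero {x y w : Fin r → ℕ} (hw : w ≠ 0) :
    ∑ i, (x i + w i) * (y i + w i) ≠ 0 := by
  obtain ⟨i, hi⟩ := Function.ne_iff.mp hw
  have hi : w i ≠ 0 := by simpa using hi
  rw [Ne, Finset.sum_eq_zero_iff, not_forall]
  exact ⟨i, fun h => Nat.mul_ne_zero (by omega) (by omega) (h (Finset.mem_univ i))⟩

section Fiber

variable {A : Fin r → M} {a : M} {u v : Fin r → ℕ}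

lemma sum_mul_eq_zero_of_fiber_eq_pair (hfib : {w : Fin r → ℕ | phi A w = a} = {u, v})
    (hdot : ∑ i, u i * v i = 0) {p q : Fin r → ℕ} (hp : phi A p = a) (hq : phi A q = a)
    (hpq : p ≠ q) : ∑ i, p i * q i = 0 := by
  have hp : p ∈ ({u, v} : Set (Fin r → ℕ)) := hfib ▸ hp
  have hq : q ∈ ({u, v} : Set (Fin r → ℕ)) := hfib ▸ hq
  rcases hp with rfl | rfl <;> rcases hq with rfl | rfl
  · exact absurd rfl hpq
  · exact hdot
  · simpa only [mul_comm] using hdot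
  · exact absurd rfl hpq

lemma Rrel.eq_of_fiber_eq_pair (hfib : {w : Fin r → ℕ | phi A w = a} = {u, v})
    (hdot : ∑ i, u i * v i = 0) {x : Fin r → ℕ} (h : Rrel A a u x) : x = u := by
  induction h with
  | refl => rfl
  | @tail y z _ hyz ih =>
    subst ih
    obtain ⟨hy, hz, hne⟩ := hyz
    by_contra hzy
    exact hne (sum_mul_eq_zero_of_fiber_eq_pair hfib hdot hy hz (Ne.symm hzy))

lemma eq_zero_of_add_mem_fiber_pair (hfib : {w : Fin r → ℕ | phi A w = a} = {u, v})
    (hdot : ∑ i, u i * v i = 0) {x y w : Fin r → ℕ} (hxy : x ≠ y)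
    (hx : phi A (x + w) = a) (hy : phi A (y + w) = a) : w = 0 := by
  by_contra hw
  exact sum_add_mul_add_ne_zero hw
    (sum_mul_eq_zero_of_fiber_eq_pair hfib hdot hx hy fun h => hxy (add_right_cancel h))

end Fiber

lemma hasUniquePres_iff (A : Fin r → M) (a : M) :
    HasUniquePres A a ↔ IsBetti A a ∧ {w : Fin r → ℕ | phi A w = a}.encard = 2 := by
  constructor
  · rintro ⟨u, v, huv, hfib, hdot⟩
    have hu : phi A u = a := (Set.ext_iff.mp hfib u).mpr (Or.inl rfl)
    have hv : phi A v = a := (Set.ext_iff.mp hfib v).mpr (Or.inr rfl)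
    refine ⟨⟨u, v, hu, hv, fun h => huv (h.eq_of_fiber_eq_pair hfib hdot).symm⟩, ?_⟩
    rw [hfib]
    exact Set.encard_pair huv
  · rintro ⟨⟨u, v, hu, hv, hnR⟩, hcard⟩
    have huv : u ≠ v := by rintro rfl; exact hnR .refl
    have hfib : {w : Fin r → ℕ | phi A w = a} = {u, v} :=
      ((Set.toFinite _).eq_of_subset_of_encard_le (Set.pair_subset (s := {w | phi A w = a}) hu hv)
        (by rw [hcard, Set.encard_pair huv])).symm
    have hdot : ∑ i, u i * v i = 0 := by
      by_contra h
      exact hnR (.single ⟨hu, hv, h⟩)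
    exact ⟨u, v, huv, hfib, hdot⟩

lemma HasUniquePres.bettiMinimal {M : Type*} [AddCancelCommMonoid M] {r : ℕ} {A : Fin r → M}
    (hgen : ∀ s : M, ∃ u : Fin r → ℕ, phi A u = s) {a : M} (ha : HasUniquePres A a) :
    BettiMinimal A a := by
  refine ⟨((hasUniquePres_iff A a).mp ha).1, ?_⟩
  rintro b ⟨x, y, hx, hy, hnR⟩ ⟨c, rfl⟩
  obtain ⟨u, v, -, hfib, hdot⟩ := ha
  obtain ⟨w, rfl⟩ := hgen c
  have hxy : x ≠ y := by rintro rfl; exact hnR .refl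
  have hw : w = 0 := eq_zero_of_add_mem_fiber_pair hfib hdot hxy
    (by rw [phi_add, hx]) (by rw [phi_add, hy])
  rw [hw, phi_zero, add_zero]

theorem stmt3_general {M : Type*} [AddCancelCommMonoid M] {r : ℕ} (A : Fin r → M)
    (hgen : ∀ s : M, ∃ u : Fin r → ℕ, phi A u = s)
    (a : M) :
    (HasUniquePres A a ↔
        (IsBetti A a ∧ {w : Fin r → ℕ | phi A w = a}.encard = 2)) ∧
    ((IsBetti A a ∧ {w : Fin r → ℕ | phi A w = a}.encard = 2) ↔
        (BettiMinimal A a ∧ {w : Fin r → ℕ | phi A w = a}.encard = 2)) := by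
  refine ⟨hasUniquePres_iff A a, fun h => ⟨?_, h.2⟩, fun h => ⟨h.1.1, h.2⟩⟩
  exact ((hasUniquePres_iff A a).mpr h).bettiMinimal hgen

/-- `a` has a unique presentation iff `a` is a Betti element with exactly two factorizations,
iff `a` is Betti-minimal with exactly two factorizations. -/
theorem stmt3 {M : Type*} [AddCancelCommMonoid M] {r : ℕ} (A : Fin r → M)
    (hred : ∀ x y : M, x + y = 0 → x = 0)
    (hgen : ∀ s : M, ∃ u : Fin r → ℕ, phi A u = s)
    (hmin : ∀ i : Fin r, ¬ ∃ u : Fin r → ℕ, u i = 0 ∧ phi A u = A i)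
    (a : M) :
    (HasUniquePres A a ↔
        (IsBetti A a ∧ {w : Fin r → ℕ | phi A w = a}.encard = 2)) ∧
    ((IsBetti A a ∧ {w : Fin r → ℕ | phi A w = a}.encard = 2) ↔
        (BettiMinimal A a ∧ {w : Fin r → ℕ | phi A w = a}.encard = 2)) :=
  stmt3_general A hgen a
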